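/- Let P ∈ ℚ[z_1,…,z_m] be a polynomial in m variables over the rationals with positive leading coefficient (with respect to the anti-lexicographic order on multi-indices) and with no constant term. Then there exists N ∈ ℕ such that: there exists n̄_1 such that for all natural numbers n_1 ≥ n̄_1, there exists n̄_2 such that for all n_2 ≥ n̄_2, …, there exists n̄_m such that for all n_m ≥ n̄_m, one has P(n_1 N, n_2 N, …, n_m N) ∈ ℕ (a positive integer). In particular, the polynomial function P satisfies condition (‡): there exist n̄_1, N_1 ∈ ℕ such that for all n_1 ≥ n̄_1 there exist n̄_2, N_2 such that for all n_2 ≥ n̄_2 … there exist n̄_m, N_m such that for all n_m ≥ n̄_m, f(n_1N_1,…,n_mN_m) ∈ ℕ. -/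

import Mathlib

/-- The anti-lexicographic (strict) order on multi-indices: α < β iff α_i < β_i where
i = max{j : α_j ≠ β_j}; equivalently, α_i < β_i for some i with α_j = β_j for all j > i. -/
def AntiLexLT {m : ℕ} (a b : Fin m →₀ ℕ) : Prop :=
  ∃ i : Fin m, a i < b i ∧ ∀ j : Fin m, i < j → a j = b j

/-- The alternating quantifier string over the positive integers:
∃ n̄₁ ∀ n₁ ≥ n̄₁ ∃ n̄₂ ∀ n₂ ≥ n̄₂ … ∃ n̄_m ∀ n_m ≥ n̄_m, Q(n₁,…,n_m). -/
def AltQuantNat : (m : ℕ) → ((Fin m → ℕ) → Prop) → Prop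
  | 0, Q => Q Fin.elim0
  | m + 1, Q => ∃ nbar : ℕ, 0 < nbar ∧
      ∀ n : ℕ, nbar ≤ n → AltQuantNat m (fun v => Q (Fin.cons n v))

/-- Condition (‡) for a property Q of m-tuples of positive integers:
∃ n̄₁,N₁ ∀ n₁ ≥ n̄₁ ∃ n̄₂,N₂ ∀ n₂ ≥ n̄₂ … ∃ n̄_m,N_m ∀ n_m ≥ n̄_m, Q(n₁N₁,…,n_mN_m). -/
def DDagger : (m : ℕ) → ((Fin m → ℕ) → Prop) → Prop
  | 0, Q => Q Fin.elim0
  | m + 1, Q => ∃ nbar N : ℕ, 0 < nbar ∧ 0 < N ∧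
      ∀ n : ℕ, nbar ≤ n → DDagger m (fun v => Q (Fin.cons (n * N) v))

/-!
Clearing denominators: if `N` is a common denominator of the coefficients of `P`, every monomial
of `P` has degree at least one, so `P(n₁N, …, n_mN)` is an integer.

Positivity: substituting `y` for `z₁` turns `P` into a polynomial in `z₂, …, z_m` whose coefficient
at the tail of the leading index `α` is a univariate polynomial in `y` with leading coefficient
`c_α > 0`, hence positive for large `y`, while every other surviving index has an
anti-lexicographically smaller tail. Induction on `m` then gives positivity under the alternating
quantifiers along any sequence tending to infinity, here `n ↦ nN`; condition (‡) follows with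
all `Nᵢ = N`.
-/

open Filter Polynomial

theorem AltQuantNat.mono {m : ℕ} {Q Q' : (Fin m → ℕ) → Prop} (h : ∀ v, Q v → Q' v)
    (hQ : AltQuantNat m Q) : AltQuantNat m Q' := by
  induction m with
  | zero => exact h _ hQ
  | succ m ih =>
    obtain ⟨nbar, hnbar, hQ⟩ := hQ
    exact ⟨nbar, hnbar, fun n hn => ih (fun v => h _) (hQ n hn)⟩

theorem AltQuantNat.succ_of_eventually {m : ℕ} {Q : (Fin (m + 1) → ℕ) → Prop}
    (h : ∀ᶠ n in atTop, AltQuantNat m fun v => Q (Fin.cons n v)) : AltQuantNat (m + 1) Q := by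
  obtain ⟨nbar, hnbar⟩ := eventually_atTop.1 h
  exact ⟨max nbar 1, by omega, fun n hn => hnbar n (le_of_max_le_left hn)⟩

theorem DDagger.of_altQuantNat_mul {m N : ℕ} (hN : 0 < N) {Q : (Fin m → ℕ) → Prop}
    (h : AltQuantNat m fun v => Q fun i => v i * N) : DDagger m Q := by
  induction m with
  | zero => exact (congrArg Q (funext fun i => i.elim0)).mp h
  | succ m ih =>
    obtain ⟨nbar, hnbar, h⟩ := h
    refine ⟨nbar, N, hnbar, hN, fun n hn => ih (h n hn |>.mono fun v hv => ?_)⟩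
    convert hv using 2 with i
    cases i using Fin.cases <;> simp

theorem antiLexLT_irrefl {m : ℕ} (a : Fin m →₀ ℕ) : ¬AntiLexLT a a :=
  fun ⟨_, hlt, _⟩ => hlt.false

theorem antiLexLT_cons_left_iff {m k : ℕ} {β : Fin m →₀ ℕ} {b : Fin (m + 1) →₀ ℕ} :
    AntiLexLT (β.cons k) b ↔ k < b 0 ∧ β = b.tail ∨ AntiLexLT β b.tail := by
  conv_lhs => rw [← Finsupp.cons_tail b]
  simp [AntiLexLT, Fin.exists_fin_succ, Fin.forall_fin_succ, Finsupp.ext_iff, Finsupp.tail_apply]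

def HasPosAntiLexLeadingCoeff {R : Type*} [CommSemiring R] [PartialOrder R] {m : ℕ}
    (P : MvPolynomial (Fin m) R) : Prop :=
  ∃ α ∈ P.support, 0 < P.coeff α ∧ ∀ β ∈ P.support, β ≠ α → AntiLexLT β α

section Slice

variable {R σ : Type*} [CommSemiring R]

noncomputable def Polynomial.coeffSlice (β : σ →₀ ℕ) (F : (MvPolynomial σ R)[X]) : R[X] :=
  ∑ k ∈ F.support, monomial k ((F.coeff k).coeff β)

theorem Polynomial.coeff_coeffSlice (β : σ →₀ ℕ) (F : (MvPolynomial σ R)[X]) (k : ℕ) :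
    (F.coeffSlice β).coeff k = (F.coeff k).coeff β := by
  simp +contextual [coeffSlice, finsetSum_coeff, coeff_monomial]

theorem Polynomial.coeff_eval_C (β : σ →₀ ℕ) (F : (MvPolynomial σ R)[X]) (y : R) :
    (F.eval (MvPolynomial.C y)).coeff β = (F.coeffSlice β).eval y := by
  rw [eval_eq_sum, sum_def, MvPolynomial.coeff_sum, coeffSlice, eval_finsetSum]
  refine Finset.sum_congr rfl fun k _ => ?_
  rw [← map_pow, mul_comm, MvPolynomial.coeff_C_mul, eval_monomial, mul_comm]

end Slice

theorem MvPolynomial.eval_eval_C_finSuccEquiv {R : Type*} [CommSemiring R] {n : ℕ}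
    (f : MvPolynomial (Fin (n + 1)) R) (y : R) (s : Fin n → R) :
    eval s ((finSuccEquiv R n f).eval (C y)) = eval (Fin.cons y s) f := by
  rw [eval_eq_eval_mv_eval', Polynomial.eval_map, ← Polynomial.eval₂_hom, eval_C]

theorem Polynomial.eventually_pos_of_leadingCoeff_pos {𝕜 : Type*} [NormedField 𝕜] [LinearOrder 𝕜]
    [IsStrictOrderedRing 𝕜] [OrderTopology 𝕜] {p : 𝕜[X]} (hp : 0 < p.leadingCoeff) :
    ∀ᶠ x in atTop, 0 < p.eval x := by
  rcases le_or_gt p.degree 0 with hdeg | hdeg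
  · have hC := eq_C_of_degree_le_zero hdeg
    rw [hC, leadingCoeff_C] at hp
    exact Eventually.of_forall fun x => by rwa [hC, eval_C]
  · exact (tendsto_atTop_of_leadingCoeff_nonneg p hdeg hp.le).eventually_gt_atTop 0

section Positivity

open MvPolynomial

variable {𝕜 : Type*} [NormedField 𝕜] [LinearOrder 𝕜] [IsStrictOrderedRing 𝕜] [OrderTopology 𝕜]

theorem eventually_hasPosAntiLexLeadingCoeff_eval_finSuccEquiv {m : ℕ}
    {P : MvPolynomial (Fin (m + 1)) 𝕜} (hP : HasPosAntiLexLeadingCoeff P) :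
    ∀ᶠ y in atTop, HasPosAntiLexLeadingCoeff ((finSuccEquiv 𝕜 m P).eval (C y)) := by
  obtain ⟨α, hαP, hα, hmax⟩ := hP
  set F := finSuccEquiv 𝕜 m P
  have hF : ∀ β k, (F.coeffSlice β).coeff k = P.coeff (β.cons k) := fun β k => by
    rw [coeff_coeffSlice, finSuccEquiv_coeff_coeff]
  have hdeg : (F.coeffSlice α.tail).natDegree = α 0 := by
    refine natDegree_eq_of_le_of_coeff_ne_zero (natDegree_le_iff_coeff_eq_zero.2 fun k hk => ?_)
      (by rwa [hF, Finsupp.cons_tail, ← MvPolynomial.mem_support_iff])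
    rw [hF]
    by_contra hne
    have hlt := hmax _ (MvPolynomial.mem_support_iff.2 hne) fun h =>
      hk.ne (by rw [← h, Finsupp.cons_zero])
    rw [antiLexLT_cons_left_iff] at hlt
    exact hlt.elim (fun h => by omega) (antiLexLT_irrefl _)
  have hlead : 0 < (F.coeffSlice α.tail).leadingCoeff := by
    rwa [leadingCoeff, hdeg, hF, Finsupp.cons_tail]
  filter_upwards [eventually_pos_of_leadingCoeff_pos hlead] with y hy
  refine ⟨α.tail, ?_, by rwa [coeff_eval_C], fun β hβ hne => ?_⟩
  · rw [MvPolynomial.mem_support_iff, coeff_eval_C]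
    exact hy.ne'
  have hslice : F.coeffSlice β ≠ 0 := by
    rintro h
    rw [MvPolynomial.mem_support_iff, coeff_eval_C, h, Polynomial.eval_zero] at hβ
    exact hβ rfl
  obtain ⟨k, hk⟩ := Polynomial.support_nonempty.2 hslice
  rw [Polynomial.mem_support_iff, hF] at hk
  have hlt := hmax _ (MvPolynomial.mem_support_iff.2 hk) fun h =>
    hne (by rw [← h, Finsupp.tail_cons])
  rw [antiLexLT_cons_left_iff] at hlt
  exact hlt.resolve_left fun h => hne h.2

theorem altQuantNat_eval_pos {g : ℕ → 𝕜} (hg : Tendsto g atTop atTop) :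
    ∀ {m : ℕ} {P : MvPolynomial (Fin m) 𝕜}, HasPosAntiLexLeadingCoeff P →
      AltQuantNat m fun v => 0 < eval (g ∘ v) P
  | 0, P, ⟨α, _, hα, _⟩ => by
    rw [Subsingleton.elim α 0] at hα
    show 0 < eval _ P
    rwa [eq_C_of_isEmpty P, MvPolynomial.eval_C]
  | _ + 1, _, hP =>
    AltQuantNat.succ_of_eventually <|
      (hg.eventually (eventually_hasPosAntiLexLeadingCoeff_eval_finSuccEquiv hP)).mono
        fun _ hn => by
          simpa only [Fin.comp_cons, ← eval_eval_C_finSuccEquiv] using altQuantNat_eval_pos hg hn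

end Positivity

open MvPolynomial in
theorem exists_nat_eval_mul_mem_range_intCast {σ : Type*} [Fintype σ] (P : MvPolynomial σ ℚ)
    (hP : P.coeff 0 = 0) :
    ∃ N : ℕ, 0 < N ∧ ∀ v : σ → ℤ, eval (fun i => (v i : ℚ) * N) P ∈ (Int.castRingHom ℚ).range := by
  refine ⟨∏ d ∈ P.support, (P.coeff d).den, Finset.prod_pos fun d _ => (P.coeff d).pos,
    fun v => ?_⟩
  set N := ∏ d ∈ P.support, (P.coeff d).den
  rw [eval_eq']
  refine Subring.sum_mem _ fun d hd => ?_
  obtain ⟨S, hS⟩ : ∃ S, ∑ i, d i = S + 1 := Nat.exists_eq_succ_of_ne_zero fun h =>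
    MvPolynomial.mem_support_iff.1 hd (by
      rwa [show d = 0 from Finsupp.ext fun i => Finset.sum_eq_zero_iff.1 h i (Finset.mem_univ i)])
  have hterm : P.coeff d * ∏ i, ((v i : ℚ) * N) ^ d i
      = P.coeff d * N * ((N : ℚ) ^ S * ∏ i, (v i : ℚ) ^ d i) := by
    rw [Finset.prod_congr rfl fun i _ => mul_pow (v i : ℚ) N (d i), Finset.prod_mul_distrib,
      Finset.prod_pow_eq_pow_sum, hS, pow_succ]
    ring
  obtain ⟨k, hk⟩ : (P.coeff d).den ∣ N := Finset.dvd_prod_of_mem _ hd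
  have hcoeff : P.coeff d * N = (Int.castRingHom ℚ) ((P.coeff d).num * k) := by
    rw [hk, map_mul, Nat.cast_mul, ← mul_assoc, Rat.mul_den_eq_num]
    simp
  rw [hterm, hcoeff]
  exact mul_mem (RingHom.mem_range_self _ _)
    (mul_mem (pow_mem (RingHom.mem_range.2 ⟨(N : ℤ), by simp⟩) S)
      (prod_mem fun i _ => pow_mem (RingHom.mem_range.2 ⟨v i, by simp⟩) (d i)))

/-- If P ∈ ℚ[z₁,…,z_m] has positive leading coefficient (anti-lexicographic
order) and no constant term, then there is N ∈ ℕ, N ≥ 1, such that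
∃ n̄₁ ∀ n₁ ≥ n̄₁ … ∃ n̄_m ∀ n_m ≥ n̄_m, P(n₁N,…,n_mN) is a positive integer.
In particular, P satisfies condition (‡). -/
theorem rat_poly_satisfies_ddagger (m : ℕ) (P : MvPolynomial (Fin m) ℚ)
    (hlead : ∃ α ∈ P.support, 0 < P.coeff α ∧ ∀ β ∈ P.support, β ≠ α → AntiLexLT β α)
    (hconst : P.coeff 0 = 0) :
    (∃ N : ℕ, 0 < N ∧ AltQuantNat m (fun v => ∃ t : ℕ, 0 < t ∧
        MvPolynomial.eval (fun i => ((v i : ℚ) * (N : ℚ))) P = (t : ℚ))) ∧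
    DDagger m (fun v => ∃ t : ℕ, 0 < t ∧
        MvPolynomial.eval (fun i => ((v i : ℚ))) P = (t : ℚ)) := by
  obtain ⟨N, hN, hint⟩ := exists_nat_eval_mul_mem_range_intCast P hconst
  have hpos : AltQuantNat m fun v => 0 < MvPolynomial.eval (fun i => (v i : ℚ) * N) P :=
    altQuantNat_eval_pos (tendsto_natCast_atTop_atTop.atTop_mul_const (by exact_mod_cast hN)) hlead
  have halt : AltQuantNat m fun v => ∃ t : ℕ, 0 < t ∧
      MvPolynomial.eval (fun i => (v i : ℚ) * N) P = t := hpos.mono fun v hv => by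
    obtain ⟨z, hz⟩ := hint fun i => v i
    simp only [Int.coe_castRingHom, Int.cast_natCast] at hz
    rw [← hz] at hv ⊢
    lift z to ℕ using (Int.cast_pos.1 hv).le
    exact ⟨z, by exact_mod_cast hv, by simp⟩
  refine ⟨⟨N, hN, halt⟩, DDagger.of_altQuantNat_mul hN (halt.mono fun v hv => ?_)⟩
  simpa only [Nat.cast_mul] using hv
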